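/- arXiv:2001.02071 — 6 statements merged into one kernel-verified Lean document; each statement's English description precedes it below -/
import Mathlib

section
/- Let u : ℝ^J → ℝ ∪ {−∞} be upper semicontinuous and concave with u(x⁰) finite, and suppose u(x + r·g) > u(x) whenever u(x) > −∞ and r > 0. Then the indifference price function D(x) := sup{r ∈ ℝ : u(x⁰ + x − r·g) ≥ u(x⁰)} is concave and upper semicontinuous, satisfies D(0) = 0, and satisfies D(x + r·g) = D(x) + r for every x with D(x) > −∞ and every r ∈ ℝ. -/
open scoped BigOperators
open Metric Filter

noncomputable section

/-- The inner product `p·y = ∑ j, p j * y j`. -/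
def dotp {J : Type*} [Fintype J] (p y : EuclideanSpace ℝ J) : ℝ := ∑ j, p j * y j

/-- A function `u : ℝ^J → ℝ ∪ {±∞}` is concave iff its hypograph is convex. -/
def HypoConcave {J : Type*} [Fintype J] (u : EuclideanSpace ℝ J → EReal) : Prop :=
  Convex ℝ {q : EuclideanSpace ℝ J × ℝ | (q.2 : EReal) ≤ u q.1}

/-- Indifference price function `D(x) = sup {r ∈ ℝ : u(x⁰ + x − r·g) ≥ u(x⁰)}`,
the supremum being taken in `ℝ ∪ {±∞}`. -/
def indiff {J : Type*} [Fintype J] (u : EuclideanSpace ℝ J → EReal)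
    (x0 g x : EuclideanSpace ℝ J) : EReal :=
  sSup {e : EReal | ∃ r : ℝ, e = (r : EReal) ∧ u x0 ≤ u (x0 + x - r • g)}

/-- `p` is a supergradient of `D` at `xb`: `D xb` is finite and
`D x ≤ D xb + p·(x − xb)` for all `x`. -/
def IsSupergradient {J : Type*} [Fintype J] (D : EuclideanSpace ℝ J → EReal)
    (p xb : EuclideanSpace ℝ J) : Prop :=
  D xb ≠ ⊥ ∧ D xb ≠ ⊤ ∧ ∀ x, D x ≤ D xb + ((dotp p (x - xb) : ℝ) : EReal)

/-- Optimal value `v(z)` of the perturbed market clearing problem `(P_z)`. -/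
def marketValue {I J : Type*} [Fintype I] [Fintype J]
    (D : I → EuclideanSpace ℝ J → EReal) (z : EuclideanSpace ℝ J) : EReal :=
  sSup {e : EReal | ∃ x : I → EuclideanSpace ℝ J, (∑ i, x i) = z ∧ e = ∑ i, D i (x i)}

/-- Optimal value of problem `(P')`, the total consumer surplus at allocation `w`. -/
def CSval {I J : Type*} [Fintype I] [Fintype J]
    (u : I → EuclideanSpace ℝ J → EReal) (g : EuclideanSpace ℝ J)
    (w : I → EuclideanSpace ℝ J) : EReal :=
  sSup {e : EReal | ∃ s : ℝ, e = (s : EReal) ∧ ∃ z : I → EuclideanSpace ℝ J,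
    (∑ i, z i) + s • g = ∑ i, w i ∧ ∀ i, u i (w i) ≤ u i (z i)}

/-- Recession function `u^∞(y) = inf_{α>0} (u(x⁰ + α·y) − u(x⁰))/α`. -/
def recession {J : Type*} [Fintype J] (u : EuclideanSpace ℝ J → EReal)
    (x0 y : EuclideanSpace ℝ J) : EReal :=
  sInf {e : EReal | ∃ α : ℝ, 0 < α ∧ e = (u (x0 + α • y) - u x0) / (α : EReal)}

/-- Pareto efficiency of an allocation `x` with total endowment `∑ i, x i`. -/
def ParetoEfficient {I J : Type*} [Fintype I] [Fintype J]
    (u : I → EuclideanSpace ℝ J → EReal) (x : I → EuclideanSpace ℝ J) : Prop :=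
  ¬ ∃ x' : I → EuclideanSpace ℝ J, (∑ i, x' i) = (∑ i, x i) ∧
      (∀ i, u i (x i) ≤ u i (x' i)) ∧ ∃ i, u i (x i) < u i (x' i)

/-! The indifference price `D x` is the supremum of the section at `x` of the acceptance set
`A = {(x, r) | u x⁰ ≤ u (x⁰ + x - r • g)}`. Strict monotonicity of `u` along `g` makes every
section of `A` a down-set, so `A` lies between the strict hypograph and the hypograph of `D`.
That sandwich alone transfers the properties of `A` to `D`: `A` is convex (a preimage of a
superlevel set of the concave `u` under an affine map), its sections have open complements
(`u` is upper semicontinuous), and translating `x` by `r • g` shifts its section by `r`. -/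

structure IsSqueezedHypograph {E : Type*} (A : Set (E × ℝ)) (D : E → EReal) : Prop where
  coe_le_of_mem : ∀ {x : E} {r : ℝ}, (x, r) ∈ A → (r : EReal) ≤ D x
  mem_of_coe_lt : ∀ {x : E} {r : ℝ}, (r : EReal) < D x → (x, r) ∈ A

namespace IsSqueezedHypograph

variable {E : Type*} {A : Set (E × ℝ)} {D : E → EReal}

theorem le_of_notMem (hA : IsSqueezedHypograph A D) {x : E} {r : ℝ} (hr : (x, r) ∉ A) :
    D x ≤ r :=
  not_lt.mp fun h => hr (hA.mem_of_coe_lt h)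

theorem coe_le_iff_forall_sub_mem (hA : IsSqueezedHypograph A D) {x : E} {r : ℝ} :
    (r : EReal) ≤ D x ↔ ∀ δ : ℝ, 0 < δ → (x, r - δ) ∈ A := by
  refine ⟨fun h δ hδ => hA.mem_of_coe_lt ?_, fun h => EReal.ge_of_forall_gt_iff_ge.mp ?_⟩
  · exact lt_of_lt_of_le (EReal.coe_lt_coe_iff.mpr (by linarith)) h
  · intro z hz
    simpa using hA.coe_le_of_mem (h (r - z) (by linarith [EReal.coe_lt_coe_iff.mp hz]))

theorem convex_hypograph [AddCommGroup E] [Module ℝ E] (hA : IsSqueezedHypograph A D)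
    (hconv : Convex ℝ A) : Convex ℝ {q : E × ℝ | (q.2 : EReal) ≤ D q.1} := by
  have hhyp : {q : E × ℝ | (q.2 : EReal) ≤ D q.1}
      = ⋂ δ : ℝ, ⋂ _ : 0 < δ, (fun q => q + ((0 : E), -δ)) ⁻¹' A := by
    ext ⟨x, r⟩
    simp [hA.coe_le_iff_forall_sub_mem, sub_eq_add_neg]
  rw [hhyp]
  exact convex_iInter₂ fun δ _ => hconv.translate_preimage_left _

theorem upperSemicontinuous [TopologicalSpace E] (hA : IsSqueezedHypograph A D)
    (hopen : ∀ r : ℝ, IsOpen {x | (x, r) ∉ A}) : UpperSemicontinuous D := by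
  intro x y hxy
  obtain ⟨r, hxr, hry⟩ := EReal.exists_between_coe_real hxy
  have hx : (x, r) ∉ A := fun h => (hA.coe_le_of_mem h).not_gt hxr
  filter_upwards [(hopen r).mem_nhds hx] with x' hx'
  exact (hA.le_of_notMem hx').trans_lt hry

theorem eq_add_of_mem_iff (hA : IsSqueezedHypograph A D) {x x' : E} {r : ℝ}
    (hshift : ∀ s : ℝ, (x', s) ∈ A ↔ (x, s - r) ∈ A) : D x' = D x + r := by
  apply le_antisymm
  · refine EReal.ge_of_forall_gt_iff_ge.mp fun w hw => ?_
    have h := hA.coe_le_of_mem ((hshift w).mp (hA.mem_of_coe_lt hw))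
    exact (EReal.sub_le_iff_le_add (.inl (EReal.coe_ne_bot r)) (.inl (EReal.coe_ne_top r))).mp h
  · refine EReal.ge_of_forall_gt_iff_ge.mp fun w hw => ?_
    have hw' : ((w - r : ℝ) : EReal) < D x := EReal.sub_lt_of_lt_add hw
    simpa using hA.coe_le_of_mem ((hshift w).mpr (hA.mem_of_coe_lt hw'))

end IsSqueezedHypograph

theorem convex_superlevel_of_convex_hypograph {E : Type*} [AddCommGroup E] [Module ℝ E]
    {u : E → EReal} (hu : Convex ℝ {q : E × ℝ | (q.2 : EReal) ≤ u q.1}) (c : EReal) :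
    Convex ℝ {y | c ≤ u y} := by
  have hlevel : {y | c ≤ u y} = ⋂ t : ℝ, ⋂ _ : (t : EReal) < c, {y | (t : EReal) ≤ u y} := by
    ext y
    simp only [Set.mem_iInter]
    exact EReal.ge_of_forall_gt_iff_ge.symm
  rw [hlevel]
  refine convex_iInter₂ fun t _ y₁ hy₁ y₂ hy₂ a b ha hb hab => ?_
  have h := hu (x := (y₁, t)) (y := (y₂, t)) hy₁ hy₂ ha hb hab
  simpa [← add_mul, hab] using h

section Acceptance

variable {E : Type*} [AddCommGroup E] [Module ℝ E]

def acceptSet (u : E → EReal) (x0 g : E) : Set (E × ℝ) :=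
  {q | u x0 ≤ u (x0 + q.1 - q.2 • g)}

variable {u : E → EReal} {x0 g : E}

theorem convex_acceptSet (hu : Convex ℝ {q : E × ℝ | (q.2 : EReal) ≤ u q.1}) :
    Convex ℝ (acceptSet u x0 g) := by
  let L : E × ℝ →ₗ[ℝ] E := LinearMap.fst ℝ E ℝ - (LinearMap.snd ℝ E ℝ).smulRight g
  have hL : acceptSet u x0 g = L ⁻¹' ((fun y => x0 + y) ⁻¹' {y | u x0 ≤ u y}) := by
    ext q
    simp [acceptSet, L, add_sub_assoc]
  rw [hL]
  exact ((convex_superlevel_of_convex_hypograph hu _).translate_preimage_right x0).linear_preimage L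

theorem isOpen_setOf_notMem_acceptSet [TopologicalSpace E] [ContinuousAdd E] [ContinuousSub E]
    (hu : UpperSemicontinuous u) (r : ℝ) : IsOpen {x | (x, r) ∉ acceptSet u x0 g} := by
  have hcont : Continuous fun x : E => x0 + x - r • g := by fun_prop
  convert (hu.isOpen_preimage (u x0)).preimage hcont using 1
  ext x
  simp [acceptSet]

theorem lt_of_mem_acceptSet_of_lt (hx0 : u x0 ≠ ⊥)
    (hmono : ∀ x, ∀ r : ℝ, u x ≠ ⊥ → 0 < r → u x < u (x + r • g))
    {x : E} {r s : ℝ} (hr : (x, r) ∈ acceptSet u x0 g) (hsr : s < r) :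
    u x0 < u (x0 + x - s • g) := by
  have hne : u (x0 + x - r • g) ≠ ⊥ := ne_bot_of_le_ne_bot hx0 hr
  have hshift : x0 + x - r • g + (r - s) • g = x0 + x - s • g := by module
  exact hr.trans_lt (hshift ▸ hmono _ _ hne (sub_pos.mpr hsr))

theorem mem_acceptSet_add_iff (x : E) (r s : ℝ) :
    (x + r • g, s) ∈ acceptSet u x0 g ↔ (x, s - r) ∈ acceptSet u x0 g := by
  have hshift : x0 + (x + r • g) - s • g = x0 + x - (s - r) • g := by module
  simp only [acceptSet, Set.mem_ofPred_eq, hshift]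

end Acceptance

section Indifference

variable {J : Type*} [Fintype J] {u : EuclideanSpace ℝ J → EReal} {g x0 : EuclideanSpace ℝ J}

theorem isSqueezedHypograph_indiff (hx0 : u x0 ≠ ⊥)
    (hmono : ∀ x, ∀ r : ℝ, u x ≠ ⊥ → 0 < r → u x < u (x + r • g)) :
    IsSqueezedHypograph (acceptSet u x0 g) (indiff u x0 g) where
  coe_le_of_mem hr := le_sSup ⟨_, rfl, hr⟩
  mem_of_coe_lt {x r} hr := by
    obtain ⟨_, ⟨s, rfl, hs⟩, hrs⟩ := lt_sSup_iff.mp hr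
    exact (lt_of_mem_acceptSet_of_lt hx0 hmono hs (EReal.coe_lt_coe_iff.mp hrs)).le

theorem indiff_zero (hx0 : u x0 ≠ ⊥)
    (hmono : ∀ x, ∀ r : ℝ, u x ≠ ⊥ → 0 < r → u x < u (x + r • g)) :
    indiff u x0 g 0 = 0 := by
  have hA := isSqueezedHypograph_indiff hx0 hmono
  have hzero : ((0 : EuclideanSpace ℝ J), (0 : ℝ)) ∈ acceptSet u x0 g := by simp [acceptSet]
  refine le_antisymm (EReal.le_of_forall_lt_iff_le.mp fun r hr => hA.le_of_notMem ?_) ?_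
  · intro hr_mem
    simpa using lt_of_mem_acceptSet_of_lt hx0 hmono hr_mem (EReal.coe_pos.mp hr)
  · exact_mod_cast hA.coe_le_of_mem hzero

end Indifference

theorem indiff_concave_usc_translation_general
    {J : Type*} [Fintype J]
    (u : EuclideanSpace ℝ J → EReal) (g x0 : EuclideanSpace ℝ J)
    (husc : UpperSemicontinuous u)
    (hconc : HypoConcave u)
    (hx0 : u x0 ≠ ⊥)
    (hmono : ∀ x, ∀ r : ℝ, u x ≠ ⊥ → 0 < r → u x < u (x + r • g)) :
    HypoConcave (indiff u x0 g) ∧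
    UpperSemicontinuous (indiff u x0 g) ∧
    indiff u x0 g 0 = 0 ∧
    (∀ x : EuclideanSpace ℝ J, ∀ r : ℝ, indiff u x0 g x ≠ ⊥ →
      indiff u x0 g (x + r • g) = indiff u x0 g x + (r : EReal)) := by
  have hA := isSqueezedHypograph_indiff hx0 hmono
  exact ⟨hA.convex_hypograph (convex_acceptSet hconc),
    hA.upperSemicontinuous (isOpen_setOf_notMem_acceptSet husc),
    indiff_zero hx0 hmono,
    fun x r _ => hA.eq_add_of_mem_iff (mem_acceptSet_add_iff x r)⟩

/-- properties of the indifference price function (Lemma `usc`). -/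
theorem indiff_concave_usc_translation
    {J : Type*} [Fintype J] [Nonempty J]
    (u : EuclideanSpace ℝ J → EReal) (g x0 : EuclideanSpace ℝ J)
    (husc : UpperSemicontinuous u)
    (hconc : HypoConcave u)
    (hne_top : ∀ x, u x ≠ ⊤)
    (hx0 : u x0 ≠ ⊥)
    (hmono : ∀ x, ∀ r : ℝ, u x ≠ ⊥ → 0 < r → u x < u (x + r • g)) :
    HypoConcave (indiff u x0 g) ∧
    UpperSemicontinuous (indiff u x0 g) ∧
    indiff u x0 g 0 = 0 ∧
    (∀ x : EuclideanSpace ℝ J, ∀ r : ℝ, indiff u x0 g x ≠ ⊥ →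
      indiff u x0 g (x + r • g) = indiff u x0 g x + (r : EReal)) :=
  indiff_concave_usc_translation_general u g x0 husc hconc hx0 hmono
end
end

section
/- Suppose each D_i : ℝ^J → ℝ ∪ {−∞} is concave and upper semicontinuous and there is ε > 0 such that v(z) := sup{∑_i D_i(x_i) : ∑_i x_i = z} is finite for all z ∈ ℝ^J with ‖z‖ ≤ ε (Assumption S). Then a feasible point x̄ ∈ (ℝ^J)^I with ∑_{i∈I} x̄_i = 0 attains the supremum v(0) if and only if there exists a price vector p ∈ ℝ^J such that p is a supergradient of D_i at x̄_i for every i ∈ I. -/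
open scoped BigOperators
open Metric Filter

noncomputable section

/-! The value function `v = marketValue D` is concave, so when `x̄` is optimal its strict
hypograph is a convex subset of `ℝ^J × ℝ` missing `(0, v 0)`. Being finite near `0`, `v` is
continuous there, so the strict hypograph has interior; a hyperplane separating it from
`(0, v 0)` cannot be vertical and yields `p` with `v z ≤ v 0 + p·z` for all `z`. Changing the
bundle of a single agent `i` to `y` is feasible for the perturbed problem at `z = y - x̄ i`,
which turns this bound into `p ∈ ∂D_i(x̄_i)`. Conversely, summing the supergradient inequalities
over a feasible allocation bounds its total by `∑ D_i(x̄_i)`. -/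

open Topology Finset

lemma EReal.coe_finsetSum {ι : Type*} (s : Finset ι) (r : ι → ℝ) :
    ((∑ i ∈ s, r i : ℝ) : EReal) = ∑ i ∈ s, (r i : EReal) :=
  map_sum (⟨⟨Real.toEReal, EReal.coe_zero⟩, EReal.coe_add⟩ : ℝ →+ EReal) r s

lemma EReal.ne_bot_of_sum_ne_bot {ι : Type*} {s : Finset ι} {f : ι → EReal}
    (h : ∑ i ∈ s, f i ≠ ⊥) {i : ι} (hi : i ∈ s) : f i ≠ ⊥ := by
  classical
  rw [← Finset.add_sum_erase s f hi] at h
  exact fun hb => h (by rw [hb, EReal.bot_add])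

lemma EReal.sum_eq_coe_sum_toReal {ι : Type*} {s : Finset ι} {f : ι → EReal}
    (hbot : ∀ i ∈ s, f i ≠ ⊥) (htop : ∀ i ∈ s, f i ≠ ⊤) :
    ∑ i ∈ s, f i = ((∑ i ∈ s, (f i).toReal : ℝ) : EReal) := by
  rw [EReal.coe_finsetSum]
  exact Finset.sum_congr rfl fun i hi => (EReal.coe_toReal (htop i hi) (hbot i hi)).symm

section StrictHypograph

variable {E : Type*} [NormedAddCommGroup E] [NormedSpace ℝ E] {v : E → EReal}

def strictHypograph (v : E → EReal) : Set (E × ℝ) := {q | (q.2 : EReal) < v q.1}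

lemma concaveOn_toReal_of_convex_strictHypograph (hv : Convex ℝ (strictHypograph v))
    {s : Set E} (hs : Convex ℝ s) (hfin : ∀ z ∈ s, v z ≠ ⊥ ∧ v z ≠ ⊤) :
    ConcaveOn ℝ s fun z => (v z).toReal := by
  refine ⟨hs, fun z₁ h₁ z₂ h₂ a b ha hb hab => le_of_forall_pos_lt_add fun δ hδ => ?_⟩
  have hmem : ∀ z ∈ s, (z, (v z).toReal - δ) ∈ strictHypograph v := fun z hz => by
    change (((v z).toReal - δ : ℝ) : EReal) < v z
    conv_rhs => rw [← EReal.coe_toReal (hfin z hz).2 (hfin z hz).1]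
    exact EReal.coe_lt_coe_iff.2 (by linarith)
  have hcomb := hv (hmem z₁ h₁) (hmem z₂ h₂) ha hb hab
  have hfin' := hfin _ (hs h₁ h₂ ha hb hab)
  change ((a * ((v z₁).toReal - δ) + b * ((v z₂).toReal - δ) : ℝ) : EReal) < v (a • z₁ + b • z₂)
    at hcomb
  rw [← EReal.coe_toReal hfin'.2 hfin'.1, EReal.coe_lt_coe_iff] at hcomb
  simp only [smul_eq_mul]
  nlinarith

lemma StrongDual.apply_prod (f : StrongDual ℝ (E × ℝ)) (z : E) (t : ℝ) :
    f (z, t) = f (z, 0) + t * f (0, 1) := by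
  rw [← smul_eq_mul, ← map_smul, ← map_add, Prod.smul_mk, smul_zero, smul_eq_mul, mul_one,
    Prod.mk_add_mk, add_zero, zero_add]

variable [FiniteDimensional ℝ E]

lemma mem_interior_strictHypograph (hv : Convex ℝ (strictHypograph v)) {x₀ : E}
    (hfin : ∀ᶠ z in 𝓝 x₀, v z ≠ ⊥ ∧ v z ≠ ⊤) {t : ℝ} (ht : (t : EReal) < v x₀) :
    (x₀, t) ∈ interior (strictHypograph v) := by
  obtain ⟨r, hr, hball⟩ := Metric.mem_nhds_iff.1 hfin
  have hcont : ContinuousAt (fun z => (v z).toReal) x₀ := by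
    have := (concaveOn_toReal_of_convex_strictHypograph hv (convex_ball x₀ r)
      hball).continuousOn_interior
    rw [isOpen_ball.interior_eq] at this
    exact this.continuousAt (Metric.ball_mem_nhds x₀ hr)
  have hx₀ := hfin.self_of_nhds
  rw [← EReal.coe_toReal hx₀.2 hx₀.1, EReal.coe_lt_coe_iff] at ht
  obtain ⟨m, htm, hm⟩ := exists_between ht
  have hnear : ∀ᶠ z in 𝓝 x₀, m < (v z).toReal ∧ v z ≠ ⊥ ∧ v z ≠ ⊤ :=
    (hcont.eventually (lt_mem_nhds hm)).and hfin
  refine mem_interior_iff_mem_nhds.2 ((hnear.prod_nhds (Iio_mem_nhds htm)).mono ?_)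
  rintro ⟨z, s⟩ ⟨⟨hmz, hbot, htop⟩, hs⟩
  change (s : EReal) < v z
  rw [← EReal.coe_toReal htop hbot, EReal.coe_lt_coe_iff]
  exact lt_trans hs hmz

theorem exists_supergradient_of_convex_strictHypograph (hv : Convex ℝ (strictHypograph v))
    {x₀ : E} (hfin : ∀ᶠ z in 𝓝 x₀, v z ≠ ⊥ ∧ v z ≠ ⊤) :
    ∃ φ : StrongDual ℝ E, ∀ z, v z ≤ v x₀ + φ (z - x₀) := by
  have hx₀ := hfin.self_of_nhds
  set v₀ := (v x₀).toReal
  have hv₀ : v x₀ = v₀ := (EReal.coe_toReal hx₀.2 hx₀.1).symm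
  have hbelow : ∀ {z : E} {t : ℝ}, (t : EReal) < v z → (z, t) ∈ strictHypograph v := id
  obtain ⟨f, hf0, hf⟩ := geometric_hahn_banach_of_nonempty_interior_point hv
    (x := (x₀, v₀)) (fun h => (interior_subset (s := strictHypograph v) h).ne hv₀.symm)
    ⟨_, mem_interior_strictHypograph hv hfin (t := v₀ - 1)
      (by rw [hv₀]; exact EReal.coe_lt_coe_iff.2 (by linarith))⟩
  set g := f.comp (ContinuousLinearMap.inl ℝ E ℝ)
  set c := f (0, 1)
  have hf_apply : ∀ z t, f (z, t) = g z + t * c := f.apply_prod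
  have hc_nonneg : 0 ≤ c := by
    have := hf _ (hbelow (t := v₀ - 1) (by rw [hv₀]; exact EReal.coe_lt_coe_iff.2 (by linarith)))
    rw [hf_apply, hf_apply] at this
    linarith
  -- A vertical hyperplane would make `g` maximal at `x₀`, as `v` is finite near `x₀`.
  have hc : c ≠ 0 := by
    intro hc0
    have hmax : IsLocalMax g x₀ := hfin.mono fun z ⟨hbot, htop⟩ => by
      have := hf (z, (v z).toReal - 1) (hbelow (by
        conv_rhs => rw [← EReal.coe_toReal htop hbot]
        exact EReal.coe_lt_coe_iff.2 (by linarith)))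
      rwa [hf_apply, hf_apply, hc0, mul_zero, mul_zero, add_zero, add_zero] at this
    have hg : g = 0 := hmax.hasFDerivAt_eq_zero g.hasFDerivAt
    refine hf0 (ContinuousLinearMap.ext fun ⟨z, t⟩ => ?_)
    rw [hf_apply, hc0, mul_zero, add_zero, hg]
    rfl
  have hc_pos : 0 < c := hc_nonneg.lt_of_ne' hc
  refine ⟨-c⁻¹ • g, fun z => not_lt.1 fun hlt => ?_⟩
  rw [hv₀, ← EReal.coe_add] at hlt
  obtain ⟨t, hbt, htz⟩ := EReal.lt_iff_exists_real_btwn.1 hlt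
  have hsep := hf _ (hbelow htz)
  rw [hf_apply, hf_apply] at hsep
  have hbt' : (v₀ - c⁻¹ * (g z - g x₀)) * c < t * c := by
    refine mul_lt_mul_of_pos_right ?_ hc_pos
    simpa [sub_eq_add_neg] using EReal.coe_lt_coe_iff.1 hbt
  rw [sub_mul, mul_comm c⁻¹, mul_assoc, inv_mul_cancel₀ hc, mul_one] at hbt'
  linarith

end StrictHypograph

section Market

variable {I J : Type*} [Fintype I] [Fintype J] (D : I → EuclideanSpace ℝ J → EReal)

lemma dotp_eq_inner (p y : EuclideanSpace ℝ J) : dotp p y = inner ℝ p y := by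
  simp [dotp, PiLp.inner_apply, mul_comm]

lemma HypoConcave.coe_combo_le {u : EuclideanSpace ℝ J → EReal} (hu : HypoConcave u)
    {x y : EuclideanSpace ℝ J} {r s a b : ℝ} (hr : (r : EReal) ≤ u x) (hs : (s : EReal) ≤ u y)
    (ha : 0 ≤ a) (hb : 0 ≤ b) (hab : a + b = 1) :
    ((a * r + b * s : ℝ) : EReal) ≤ u (a • x + b • y) :=
  hu (x := (x, r)) (y := (y, s)) hr hs ha hb hab

lemma le_marketValue {x : I → EuclideanSpace ℝ J} {z : EuclideanSpace ℝ J} (hx : ∑ i, x i = z) :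
    ∑ i, D i (x i) ≤ marketValue D z :=
  le_sSup ⟨x, hx, rfl⟩

lemma lt_marketValue_iff {z : EuclideanSpace ℝ J} {e : EReal} :
    e < marketValue D z ↔ ∃ x : I → EuclideanSpace ℝ J, ∑ i, x i = z ∧ e < ∑ i, D i (x i) := by
  simp only [marketValue, lt_sSup_iff, Set.mem_ofPred_eq]
  constructor
  · rintro ⟨_, ⟨x, hx, rfl⟩, he⟩
    exact ⟨x, hx, he⟩
  · rintro ⟨x, hx, he⟩
    exact ⟨_, ⟨x, hx, rfl⟩, he⟩

lemma marketValue_le_iff {z : EuclideanSpace ℝ J} {e : EReal} :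
    marketValue D z ≤ e ↔ ∀ x : I → EuclideanSpace ℝ J, ∑ i, x i = z → ∑ i, D i (x i) ≤ e := by
  simp only [marketValue, sSup_le_iff, Set.mem_ofPred_eq]
  constructor
  · exact fun h x hx => h _ ⟨x, hx, rfl⟩
  · rintro h _ ⟨x, hx, rfl⟩
    exact h x hx

lemma convex_strictHypograph_marketValue (hconc : ∀ i, HypoConcave (D i))
    (hne_top : ∀ i x, D i x ≠ ⊤) : Convex ℝ (strictHypograph (marketValue D)) := by
  rintro ⟨z₁, t₁⟩ h₁ ⟨z₂, t₂⟩ h₂ a b ha hb hab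
  obtain ⟨x, rfl, hx⟩ := (lt_marketValue_iff D).1 h₁
  obtain ⟨y, rfl, hy⟩ := (lt_marketValue_iff D).1 h₂
  have hfin : ∀ {x : I → EuclideanSpace ℝ J} {t : ℝ}, (t : EReal) < ∑ i, D i (x i) →
      ∀ i, ((D i (x i)).toReal : EReal) = D i (x i) := fun hx i =>
    EReal.coe_toReal (hne_top _ _) (EReal.ne_bot_of_sum_ne_bot (ne_bot_of_gt hx) (mem_univ i))
  dsimp only at hx hy
  have hxr := hfin hx
  have hyr := hfin hy
  rw [← Finset.sum_congr rfl fun i _ => hxr i, ← EReal.coe_finsetSum, EReal.coe_lt_coe_iff] at hx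
  rw [← Finset.sum_congr rfl fun i _ => hyr i, ← EReal.coe_finsetSum, EReal.coe_lt_coe_iff] at hy
  change ((a * t₁ + b * t₂ : ℝ) : EReal) < marketValue D (a • ∑ i, x i + b • ∑ i, y i)
  calc ((a * t₁ + b * t₂ : ℝ) : EReal)
      < ((∑ i, (a * (D i (x i)).toReal + b * (D i (y i)).toReal) : ℝ) : EReal) := by
        rw [EReal.coe_lt_coe_iff, Finset.sum_add_distrib, ← Finset.mul_sum, ← Finset.mul_sum]
        rcases ha.eq_or_lt with rfl | ha'
        · rw [zero_add] at hab
          simpa [hab] using hy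
        · nlinarith [mul_lt_mul_of_pos_left hx ha', mul_le_mul_of_nonneg_left hy.le hb]
    _ = ∑ i, ((a * (D i (x i)).toReal + b * (D i (y i)).toReal : ℝ) : EReal) :=
        EReal.coe_finsetSum _ _
    _ ≤ ∑ i, D i (a • x i + b • y i) := Finset.sum_le_sum fun i _ =>
        (hconc i).coe_combo_le (hxr i).le (hyr i).le ha hb hab
    _ ≤ marketValue D (a • ∑ i, x i + b • ∑ i, y i) := le_marketValue D (by
        rw [Finset.sum_add_distrib, Finset.smul_sum, Finset.smul_sum])

lemma exists_price_marketValue_le (hconc : ∀ i, HypoConcave (D i)) (hne_top : ∀ i x, D i x ≠ ⊤)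
    (hS : ∀ᶠ z in 𝓝 0, marketValue D z ≠ ⊥ ∧ marketValue D z ≠ ⊤) :
    ∃ p : EuclideanSpace ℝ J, ∀ z, marketValue D z ≤ marketValue D 0 + (dotp p z : EReal) := by
  obtain ⟨φ, hφ⟩ := exists_supergradient_of_convex_strictHypograph
    (convex_strictHypograph_marketValue D hconc hne_top) hS
  refine ⟨(InnerProductSpace.toDual ℝ _).symm φ, fun z => ?_⟩
  rw [dotp_eq_inner, InnerProductSpace.toDual_symm_apply]
  simpa using hφ z

lemma isSupergradient_of_marketValue_le (hne_top : ∀ i x, D i x ≠ ⊤)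
    {xb : I → EuclideanSpace ℝ J} (hfeas : ∑ i, xb i = 0)
    (hopt : ∑ i, D i (xb i) = marketValue D 0) (hfin : marketValue D 0 ≠ ⊥)
    {p : EuclideanSpace ℝ J} (hp : ∀ z, marketValue D z ≤ marketValue D 0 + (dotp p z : EReal))
    (i : I) : IsSupergradient (D i) p (xb i) := by
  classical
  have hbot : ∀ k, D k (xb k) ≠ ⊥ := fun k =>
    EReal.ne_bot_of_sum_ne_bot (f := fun k => D k (xb k)) (hopt ▸ hfin) (mem_univ k)
  refine ⟨hbot i, hne_top i _, fun y => ?_⟩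
  set r : ℝ := ∑ k ∈ univ \ {i}, (D k (xb k)).toReal
  have hsplit : ∀ w, ∑ k, D k (Function.update xb i w k) = D i w + r := fun w => by
    simp_rw [Function.apply_update (fun k => D k), Finset.sum_update_of_mem (mem_univ i)]
    rw [EReal.sum_eq_coe_sum_toReal (fun k _ => hbot k) (fun k _ => hne_top k _)]
  have hmove : ∑ k, Function.update xb i y k = y - xb i := by
    rw [Finset.sum_update_of_mem (mem_univ i), eq_sub_iff_add_eq, add_assoc, add_comm _ (xb i),
      ← Finset.sum_eq_add_sum_sdiff_singleton_of_mem (mem_univ i), hfeas, add_zero]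
  have hle := (le_marketValue D hmove).trans (hp _)
  rw [hsplit, ← hopt, ← Function.update_eq_self i xb, hsplit, Function.update_eq_self,
    add_right_comm] at hle
  exact (EReal.addLECancellable_coe r).add_le_add_iff_right.1 hle

lemma sum_le_add_dotp_of_isSupergradient {p : EuclideanSpace ℝ J} {xb : I → EuclideanSpace ℝ J}
    (hp : ∀ i, IsSupergradient (D i) p (xb i)) (x : I → EuclideanSpace ℝ J) :
    ∑ i, D i (x i) ≤ ∑ i, D i (xb i) + (dotp p (∑ i, x i - ∑ i, xb i) : EReal) :=
  calc ∑ i, D i (x i) ≤ ∑ i, (D i (xb i) + (dotp p (x i - xb i) : EReal)) :=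
        Finset.sum_le_sum fun i _ => (hp i).2.2 (x i)
    _ = ∑ i, D i (xb i) + (dotp p (∑ i, x i - ∑ i, xb i) : EReal) := by
        rw [Finset.sum_add_distrib, ← EReal.coe_finsetSum, ← Finset.sum_sub_distrib,
          dotp_eq_inner, inner_sum]
        simp only [dotp_eq_inner]

lemma marketValue_eq_of_isSupergradient {p : EuclideanSpace ℝ J} {xb : I → EuclideanSpace ℝ J}
    (hfeas : ∑ i, xb i = 0) (hp : ∀ i, IsSupergradient (D i) p (xb i)) :
    marketValue D 0 = ∑ i, D i (xb i) := by
  refine le_antisymm ((marketValue_le_iff D).2 fun x hx => ?_) (le_marketValue D hfeas)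
  simpa [hx, hfeas, dotp_eq_inner] using sum_le_add_dotp_of_isSupergradient D hp x

end Market

theorem market_clearing_optimality_general
    {I J : Type*} [Fintype I] [Fintype J]
    (D : I → EuclideanSpace ℝ J → EReal)
    (hconc : ∀ i, HypoConcave (D i))
    (hne_top : ∀ i x, D i x ≠ ⊤)
    (hS : ∃ ε : ℝ, 0 < ε ∧ ∀ z : EuclideanSpace ℝ J, ‖z‖ ≤ ε →
      marketValue D z ≠ ⊥ ∧ marketValue D z ≠ ⊤)
    (xb : I → EuclideanSpace ℝ J) (hfeas : (∑ i, xb i) = 0) :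
    (∑ i, D i (xb i)) = marketValue D 0 ↔
      ∃ p : EuclideanSpace ℝ J, ∀ i, IsSupergradient (D i) p (xb i) := by
  refine ⟨fun hopt => ?_, fun ⟨p, hp⟩ => (marketValue_eq_of_isSupergradient D hfeas hp).symm⟩
  obtain ⟨ε, hε, hS⟩ := hS
  have hnhds : ∀ᶠ z in 𝓝 0, marketValue D z ≠ ⊥ ∧ marketValue D z ≠ ⊤ :=
    Filter.eventually_of_mem (Metric.closedBall_mem_nhds 0 hε) fun z hz =>
      hS z (mem_closedBall_zero_iff.1 hz)
  obtain ⟨p, hp⟩ := exists_price_marketValue_le D hconc hne_top hnhds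
  exact ⟨p, isSupergradient_of_marketValue_le D hne_top hfeas hopt hnhds.self_of_nhds.1 hp⟩

/-- optimality conditions for the market clearing problem (Theorem kkt). -/
theorem market_clearing_optimality
    {I J : Type*} [Fintype I] [Nonempty I] [Fintype J] [Nonempty J]
    (D : I → EuclideanSpace ℝ J → EReal)
    (hconc : ∀ i, HypoConcave (D i))
    (husc : ∀ i, UpperSemicontinuous (D i))
    (hne_top : ∀ i x, D i x ≠ ⊤)
    (hS : ∃ ε : ℝ, 0 < ε ∧ ∀ z : EuclideanSpace ℝ J, ‖z‖ ≤ ε →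
      marketValue D z ≠ ⊥ ∧ marketValue D z ≠ ⊤)
    (xb : I → EuclideanSpace ℝ J) (hfeas : (∑ i, xb i) = 0) :
    (∑ i, D i (xb i)) = marketValue D 0 ↔
      ∃ p : EuclideanSpace ℝ J, ∀ i, IsSupergradient (D i) p (xb i) :=
  market_clearing_optimality_general D hconc hne_top hS xb hfeas
end
end

section
/- Let u : ℝ^J → ℝ ∪ {−∞} be upper semicontinuous and concave with u(x⁰) finite and u(x + r·g) > u(x) whenever u(x) > −∞ and r > 0, and let D(x) := sup{r ∈ ℝ : u(x⁰ + x − r·g) ≥ u(x⁰)}. If p ∈ ℝ^J is a supergradient of D at x̄ (in particular D(x̄) is finite) and p·g = 1, then the post-trade position x¹ := x⁰ + x̄ − (p·x̄)·g satisfies u(x¹) ≥ u(x⁰). -/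
open scoped BigOperators
open Metric Filter

noncomputable section

/-! The indifference price `D(x̄)` is attained, because `u` is upper semicontinuous, and it
dominates `p·x̄`, because `D(0) ≥ 0`. Hence the post-trade position differs from the
indifference position `x⁰ + x̄ − D(x̄)·g` by the nonnegative multiple `D(x̄) − p·x̄` of the
numeraire, which cannot lower utility. -/

open Set

theorem EReal.mem_of_sSup_image_coe_eq {S : Set ℝ} (hS : IsClosed S) {d : ℝ}
    (h : sSup (((↑) : ℝ → EReal) '' S) = d) : d ∈ S := by
  have hne : S.Nonempty := by
    by_contra hS'
    rw [not_nonempty_iff_eq_empty.1 hS', image_empty, sSup_empty] at h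
    exact EReal.bot_ne_coe d h
  have hlub : IsLUB (((↑) : ℝ → EReal) '' S) d := h ▸ isLUB_sSup _
  have hlub_real : IsLUB S d :=
    ⟨fun r hr => EReal.coe_le_coe_iff.1 (hlub.1 (mem_image_of_mem _ hr)),
      fun b hb => EReal.coe_le_coe_iff.1
        (hlub.2 (forall_mem_image.2 fun r hr => EReal.coe_le_coe_iff.2 (hb hr)))⟩
  exact hlub_real.mem_of_isClosed hne hS

theorem le_add_smul_of_forall_lt_add_smul {E : Type*} [AddCommGroup E] [Module ℝ E]
    {u : E → EReal} {g : E} (hmono : ∀ x, ∀ r : ℝ, u x ≠ ⊥ → 0 < r → u x < u (x + r • g))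
    (x : E) {r : ℝ} (hr : 0 ≤ r) : u x ≤ u (x + r • g) := by
  rcases eq_or_ne (u x) ⊥ with hx | hx
  · exact hx ▸ bot_le
  rcases hr.eq_or_lt with rfl | hr
  · simp
  · exact (hmono x r hx hr).le

theorem dotp_zero_sub {J : Type*} [Fintype J] (p y : EuclideanSpace ℝ J) :
    dotp p (0 - y) = -dotp p y := by
  simp [dotp]

theorem IsSupergradient.dotp_le {J : Type*} [Fintype J] {D : EuclideanSpace ℝ J → EReal}
    {p xb : EuclideanSpace ℝ J} (hsg : IsSupergradient D p xb) (h0 : 0 ≤ D 0) :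
    (dotp p xb : EReal) ≤ D xb := by
  obtain ⟨hbot, htop, hle⟩ := hsg
  set d := (D xb).toReal
  have hd : D xb = d := (EReal.coe_toReal htop hbot).symm
  have h := h0.trans (hle 0)
  rw [hd, dotp_zero_sub, ← EReal.coe_add, ← EReal.coe_zero, EReal.coe_le_coe_iff] at h
  rw [hd, EReal.coe_le_coe_iff]
  linarith

section indiff

variable {J : Type*} [Fintype J] {u : EuclideanSpace ℝ J → EReal} {x0 g : EuclideanSpace ℝ J}

theorem indiff_eq_sSup_image (x : EuclideanSpace ℝ J) :
    indiff u x0 g x = sSup (((↑) : ℝ → EReal) '' {r | u x0 ≤ u (x0 + x - r • g)}) := by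
  rw [indiff, image]
  congr 1
  ext e
  exact exists_congr fun r => ⟨fun ⟨he, hr⟩ => ⟨hr, he.symm⟩, fun ⟨hr, he⟩ => ⟨he.symm, hr⟩⟩

theorem zero_le_indiff_zero : 0 ≤ indiff u x0 g 0 :=
  le_sSup ⟨0, EReal.coe_zero.symm, by simp⟩

theorem le_sub_smul_of_indiff_eq (husc : UpperSemicontinuous u) {x : EuclideanSpace ℝ J} {d : ℝ}
    (hd : indiff u x0 g x = d) : u x0 ≤ u (x0 + x - d • g) := by
  have hclosed : IsClosed {r : ℝ | u x0 ≤ u (x0 + x - r • g)} :=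
    (husc.isClosed_preimage (u x0)).preimage (by fun_prop)
  exact EReal.mem_of_sSup_image_coe_eq hclosed (indiff_eq_sSup_image x ▸ hd)

end indiff

theorem post_trade_improves_general
    {J : Type*} [Fintype J]
    (u : EuclideanSpace ℝ J → EReal) (g x0 : EuclideanSpace ℝ J)
    (husc : UpperSemicontinuous u)
    (hmono : ∀ x, ∀ r : ℝ, u x ≠ ⊥ → 0 < r → u x < u (x + r • g))
    (p xb : EuclideanSpace ℝ J)
    (hsg : IsSupergradient (indiff u x0 g) p xb) :
    u x0 ≤ u (x0 + xb - dotp p xb • g) := by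
  obtain ⟨d, hd⟩ : ∃ d : ℝ, indiff u x0 g xb = d :=
    ⟨_, (EReal.coe_toReal hsg.2.1 hsg.1).symm⟩
  have hpd : dotp p xb ≤ d := EReal.coe_le_coe_iff.1 (hd ▸ hsg.dotp_le zero_le_indiff_zero)
  calc u x0 ≤ u (x0 + xb - d • g) := le_sub_smul_of_indiff_eq husc hd
    _ ≤ u (x0 + xb - d • g + (d - dotp p xb) • g) :=
      le_add_smul_of_forall_lt_add_smul hmono _ (sub_nonneg.2 hpd)
    _ = u (x0 + xb - dotp p xb • g) := by rw [sub_smul]; abel_nf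

/-- the post-trade position is at least as good as the endowment. -/
theorem post_trade_improves
    {J : Type*} [Fintype J] [Nonempty J]
    (u : EuclideanSpace ℝ J → EReal) (g x0 : EuclideanSpace ℝ J)
    (husc : UpperSemicontinuous u)
    (hconc : HypoConcave u)
    (hne_top : ∀ x, u x ≠ ⊤)
    (hx0 : u x0 ≠ ⊥)
    (hmono : ∀ x, ∀ r : ℝ, u x ≠ ⊥ → 0 < r → u x < u (x + r • g))
    (p xb : EuclideanSpace ℝ J)
    (hsg : IsSupergradient (indiff u x0 g) p xb)
    (hpg : dotp p g = 1) :
    u x0 ≤ u (x0 + xb - dotp p xb • g) :=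
  post_trade_improves_general u g x0 husc hmono p xb hsg
end
end

section
/- Suppose Assumption G holds (each u_i is upper semicontinuous, concave, u_i(x⁰_i) finite, and u_i(x + r·g) > u_i(x) whenever u_i(x) > −∞ and r > 0) and Assumption R holds: whenever x ∈ (ℝ^J)^I satisfies ∑_i x_i = 0 and u_i^∞(x_i) ≥ 0 for all i, then x = 0, where u_i^∞(y) := inf_{α>0} (u_i(x⁰_i + α·y) − u_i(x⁰_i))/α. Then the market clearing problem (P) attains its supremum: there exists x̄ ∈ (ℝ^J)^I with ∑_i x̄_i = 0 and ∑_i D_i(x̄_i) = sup{∑_i D_i(x_i) : ∑_i x_i = 0}. -/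
open scoped BigOperators
open Metric Filter

noncomputable section

/-! Let `A` be the set of pairs `(x, s)` of net trades and a surplus `s ∈ ℝ` with
`∑ i, x i + s • g = 0` that leave every agent at least as well off as her endowment.
Upper semicontinuity and concavity make `A` closed and convex. Its part with `s ≥ 0` is bounded:
a recession direction `(y, σ)` of it, after handing `σ • g` back to the agents, is a zero-sum
allocation with nonnegative recession values, hence zero by Assumption R, and strict
monotonicity in `g` then forces `σ = 0`. So `s` attains a maximum `s̄` on `A`. For a zero-sum `x` and any
prices `r i` with `u i (x0 i + x i - r i • g) ≥ u i (x0 i)` the pair `(x - r • g, ∑ i, r i)` lies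
in `A`, so the value of the market clearing problem is at most `s̄`; it is attained by the optimal
net trade of `A` with `s̄ • g` handed to a single agent. -/

lemma EReal.sum_sSup_le_of_forall_sum_le {ι : Type*} (s : Finset ι) (R : ι → Set ℝ) (S : ℝ)
    (h : ∀ r : ι → ℝ, (∀ i ∈ s, r i ∈ R i) → ∑ i ∈ s, r i ≤ S) :
    ∑ i ∈ s, sSup (((↑) : ℝ → EReal) '' R i) ≤ (S : EReal) := by
  classical
  induction s using Finset.induction_on generalizing S with
  | empty => simpa using h 0 (by simp)
  | insert a s has ih =>
    rw [Finset.sum_insert has]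
    refine EReal.add_le_of_forall_lt fun a' ha' b' hb' => ?_
    obtain ⟨_, ⟨ra, hra, rfl⟩, hlt⟩ := lt_sSup_iff.1 ha'
    have hrest : ∑ i ∈ s, sSup (((↑) : ℝ → EReal) '' R i) ≤ ((S - ra : ℝ) : EReal) := by
      refine ih _ fun r hr => ?_
      have := h (Function.update r a ra) fun i hi => by
        rcases Finset.mem_insert.1 hi with rfl | hi
        · simpa using hra
        · simpa [Function.update_of_ne (ne_of_mem_of_not_mem hi has)] using hr i hi
      rw [Finset.sum_insert has, Function.update_self, Finset.sum_update_of_notMem has] at this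
      linarith
    calc a' + b' ≤ (ra : EReal) + ((S - ra : ℝ) : EReal) :=
          add_le_add hlt.le (hb'.le.trans hrest)
      _ = S := by norm_cast; ring

lemma convex_setOf_le_of_convex_hypograph {V : Type*} [AddCommGroup V] [Module ℝ V]
    {u : V → EReal} (hu : Convex ℝ {q : V × ℝ | (q.2 : EReal) ≤ u q.1}) (c : EReal) :
    Convex ℝ {x | c ≤ u x} := by
  intro x hx y hy a b ha hb hab
  refine EReal.ge_of_forall_gt_iff_ge.1 fun t ht => ?_
  have := hu (x := (x, t)) (y := (y, t)) (ht.le.trans hx) (ht.le.trans hy) ha hb hab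
  simpa [← add_mul, hab] using this

lemma exists_ne_zero_forall_smul_mem_of_not_isBounded {V : Type*} [NormedAddCommGroup V]
    [NormedSpace ℝ V] [ProperSpace V] {B : Set V} (hcl : IsClosed B) (hco : Convex ℝ B)
    (h0 : (0 : V) ∈ B) (hub : ¬ Bornology.IsBounded B) :
    ∃ d ≠ 0, ∀ t : ℝ, 0 ≤ t → t • d ∈ B := by
  rw [isBounded_iff_forall_norm_le] at hub
  push Not at hub
  choose b hbB hbn using fun n : ℕ => hub n
  have hbpos (n : ℕ) : 0 < ‖b n‖ := (Nat.cast_nonneg n).trans_lt (hbn n)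
  have hsphere (n : ℕ) : ‖b n‖⁻¹ • b n ∈ sphere (0 : V) 1 := by
    simp [norm_smul, inv_mul_cancel₀ (hbpos n).ne']
  obtain ⟨d, hd, φ, hφ, hlim⟩ := (isCompact_sphere (0 : V) 1).tendsto_subseq hsphere
  refine ⟨d, ne_zero_of_mem_unit_sphere ⟨d, hd⟩, fun t ht => ?_⟩
  refine hcl.mem_of_tendsto (hlim.const_smul t) ?_
  filter_upwards [eventually_ge_atTop ⌈t⌉₊] with n hn
  have ht_le : t ≤ ‖b (φ n)‖ := calc
    t ≤ ⌈t⌉₊ := Nat.le_ceil t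
    _ ≤ φ n := by exact_mod_cast hn.trans hφ.le_apply
    _ ≤ ‖b (φ n)‖ := (hbn (φ n)).le
  rw [Function.comp_apply, smul_smul, ← div_eq_mul_inv]
  exact hco.smul_mem_of_zero_mem h0 (hbB (φ n))
    ⟨div_nonneg ht (norm_nonneg _), (div_le_one (hbpos (φ n))).2 ht_le⟩

lemma le_apply_add_smul_of_nonneg {V : Type*} [AddCommGroup V] [Module ℝ V] {u : V → EReal}
    {g : V} (hmono : ∀ x : V, ∀ r : ℝ, u x ≠ ⊥ → 0 < r → u x < u (x + r • g)) (x : V) {r : ℝ}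
    (hr : 0 ≤ r) : u x ≤ u (x + r • g) := by
  rcases eq_or_ne (u x) ⊥ with hbot | hbot
  · simp [hbot]
  rcases hr.eq_or_lt with rfl | hr
  · simp
  exact (hmono x r hbot hr).le

lemma recession_nonneg_of_forall_le {J : Type*} [Fintype J] {u : EuclideanSpace ℝ J → EReal}
    {x0 y : EuclideanSpace ℝ J} (hbot : u x0 ≠ ⊥) (htop : u x0 ≠ ⊤)
    (h : ∀ α : ℝ, 0 < α → u x0 ≤ u (x0 + α • y)) : 0 ≤ recession u x0 y := by
  refine le_sInf ?_
  rintro _ ⟨α, hα, rfl⟩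
  refine EReal.div_nonneg ?_ (by exact_mod_cast hα.le)
  rw [EReal.le_sub_iff_add_le (.inl hbot) (.inl htop), zero_add]
  exact h α hα

lemma le_indiff_add_smul {J : Type*} [Fintype J] {u : EuclideanSpace ℝ J → EReal}
    {x0 g y : EuclideanSpace ℝ J} (hy : u x0 ≤ u (x0 + y)) (r : ℝ) :
    (r : EReal) ≤ indiff u x0 g (y + r • g) :=
  le_sSup ⟨r, rfl, by rwa [← add_assoc, add_sub_cancel_right]⟩

section Market

variable {I J : Type*} [Fintype I]

/-- The feasible set of the surplus problem `(P')` at the endowment, in net-trade coordinates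
`z i = x0 i + p.1 i` and with surplus `p.2`: `CSval u g x0` is the supremum of `p.2` over it. -/
def surplusSet (u : I → EuclideanSpace ℝ J → EReal) (g : EuclideanSpace ℝ J)
    (x0 : I → EuclideanSpace ℝ J) : Set ((I → EuclideanSpace ℝ J) × ℝ) :=
  {p | (∑ i, p.1 i) + p.2 • g = 0 ∧ ∀ i, u i (x0 i) ≤ u i (x0 i + p.1 i)}

variable {u : I → EuclideanSpace ℝ J → EReal} {g : EuclideanSpace ℝ J}
  {x0 : I → EuclideanSpace ℝ J}

lemma zero_mem_surplusSet : (0 : (I → EuclideanSpace ℝ J) × ℝ) ∈ surplusSet u g x0 := by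
  simp [surplusSet]

lemma isClosed_surplusSet [Fintype J] (husc : ∀ i, UpperSemicontinuous (u i)) :
    IsClosed (surplusSet u g x0) := by
  simp only [surplusSet, Set.ofPred_and, Set.ofPred_forall]
  refine (isClosed_eq (by fun_prop) continuous_const).inter (isClosed_iInter fun i => ?_)
  exact (upperSemicontinuous_iff_isClosed_preimage.1 (husc i) _).preimage (by fun_prop)

lemma convex_surplusSet [Fintype J] (hconc : ∀ i, HypoConcave (u i)) :
    Convex ℝ (surplusSet u g x0) := by
  rintro p ⟨hp_sum, hp_u⟩ q ⟨hq_sum, hq_u⟩ a b ha hb hab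
  refine ⟨?_, fun i => ?_⟩
  · calc (∑ i, (a • p + b • q).1 i) + (a • p + b • q).2 • g
        = a • ((∑ i, p.1 i) + p.2 • g) + b • ((∑ i, q.1 i) + q.2 • g) := by
          simp only [Prod.fst_add, Prod.snd_add, Prod.smul_fst, Prod.smul_snd, Pi.add_apply,
            Pi.smul_apply, Finset.sum_add_distrib, ← Finset.smul_sum]
          module
      _ = 0 := by rw [hp_sum, hq_sum, smul_zero, smul_zero, add_zero]
  · have := convex_setOf_le_of_convex_hypograph (hconc i) _ (hp_u i) (hq_u i) ha hb hab
    rwa [smul_add, smul_add, add_add_add_comm, Convex.combo_self hab] at this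

lemma eq_zero_of_forall_smul_mem_surplusSet [Fintype J] [Nonempty I]
    (hne_top : ∀ i x, u i x ≠ ⊤) (hfin : ∀ i, u i (x0 i) ≠ ⊥)
    (hmono : ∀ i, ∀ x : EuclideanSpace ℝ J, ∀ r : ℝ, u i x ≠ ⊥ → 0 < r →
      u i x < u i (x + r • g))
    (hrec : ∀ x : I → EuclideanSpace ℝ J, (∑ i, x i) = 0 →
      (∀ i, 0 ≤ recession (u i) (x0 i) (x i)) → x = 0)
    {d : (I → EuclideanSpace ℝ J) × ℝ}
    (hd : ∀ t : ℝ, 0 ≤ t → t • d ∈ surplusSet u g x0 ∩ {p | 0 ≤ p.2}) : d = 0 := by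
  obtain ⟨y, σ⟩ := d
  have hσ : 0 ≤ σ := by simpa using (hd 1 zero_le_one).2
  have hy_sum : (∑ i, y i) + σ • g = 0 := by simpa using (hd 1 zero_le_one).1.1
  have hy_u (i : I) (α : ℝ) (hα : 0 ≤ α) : u i (x0 i) ≤ u i (x0 i + α • y i) :=
    (hd α hα).1.2 i
  -- spread the surplus evenly over the agents to get a zero-sum allocation
  set c : ℝ := σ / Fintype.card I
  have hc : 0 ≤ c := by positivity
  have hz_sum : ∑ i, (y i + c • g) = 0 := by
    rw [Finset.sum_add_distrib, Finset.sum_const, Finset.card_univ, ← Nat.cast_smul_eq_nsmul ℝ,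
      smul_smul, mul_div_cancel₀ _ (Nat.cast_ne_zero.2 Fintype.card_ne_zero), hy_sum]
  have hz : (fun i => y i + c • g) = 0 := hrec _ hz_sum fun i =>
    recession_nonneg_of_forall_le (hfin i) (hne_top i _) fun α hα => by
      rw [smul_add, smul_smul, ← add_assoc]
      exact (hy_u i α hα.le).trans (le_apply_add_smul_of_nonneg (hmono i) _ (mul_nonneg hα.le hc))
  have hy (i : I) : y i = -(c • g) := eq_neg_of_add_eq_zero_left (congrFun hz i)
  obtain ⟨i0⟩ := ‹Nonempty I›
  have hc0 : c = 0 := by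
    by_contra hc0
    have hle := hy_u i0 1 zero_le_one
    rw [one_smul, hy i0] at hle
    have hlt := hmono i0 _ c ((Ne.bot_lt (hfin i0)).trans_le hle).ne' (hc.lt_of_ne' hc0)
    rw [neg_add_cancel_right] at hlt
    exact (hle.trans_lt hlt).false
  have hσ0 : σ = 0 := by
    simpa [c, Fintype.card_ne_zero] using hc0
  ext i <;> simp [hy, hc0, hσ0]

lemma exists_forall_surplus_le [Fintype J] [Nonempty I] (husc : ∀ i, UpperSemicontinuous (u i))
    (hconc : ∀ i, HypoConcave (u i)) (hne_top : ∀ i x, u i x ≠ ⊤)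
    (hfin : ∀ i, u i (x0 i) ≠ ⊥)
    (hmono : ∀ i, ∀ x : EuclideanSpace ℝ J, ∀ r : ℝ, u i x ≠ ⊥ → 0 < r →
      u i x < u i (x + r • g))
    (hrec : ∀ x : I → EuclideanSpace ℝ J, (∑ i, x i) = 0 →
      (∀ i, 0 ≤ recession (u i) (x0 i) (x i)) → x = 0) :
    ∃ p ∈ surplusSet u g x0, ∀ q ∈ surplusSet u g x0, q.2 ≤ p.2 := by
  set B := surplusSet u g x0 ∩ {p | 0 ≤ p.2}
  have hB0 : 0 ∈ B := ⟨zero_mem_surplusSet, le_refl (0 : ℝ)⟩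
  have hBcl : IsClosed B :=
    (isClosed_surplusSet husc).inter (isClosed_le continuous_const continuous_snd)
  have hBco : Convex ℝ B :=
    (convex_surplusSet hconc).inter (convex_halfSpace_ge (LinearMap.snd ℝ _ ℝ).isLinear 0)
  have hBbd : Bornology.IsBounded B := by
    by_contra hub
    obtain ⟨d, hd0, hd⟩ := exists_ne_zero_forall_smul_mem_of_not_isBounded hBcl hBco hB0 hub
    exact hd0 (eq_zero_of_forall_smul_mem_surplusSet hne_top hfin hmono hrec hd)
  obtain ⟨p, hpB, hp⟩ := (Metric.isCompact_of_isClosed_isBounded hBcl hBbd).exists_isMaxOn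
    ⟨0, hB0⟩ continuous_snd.continuousOn
  refine ⟨p, hpB.1, fun q hq => ?_⟩
  rcases le_or_gt 0 q.2 with hq2 | hq2
  · exact hp ⟨hq, hq2⟩
  · exact hq2.le.trans (hp hB0)

lemma sum_indiff_le_of_forall_surplus_le [Fintype J] {S : ℝ}
    (hS : ∀ q ∈ surplusSet u g x0, q.2 ≤ S) {x : I → EuclideanSpace ℝ J} (hx : ∑ i, x i = 0) :
    ∑ i, indiff (u i) (x0 i) g (x i) ≤ S := by
  have hprices : ∀ i, indiff (u i) (x0 i) g (x i) =
      sSup (((↑) : ℝ → EReal) '' {r | u i (x0 i) ≤ u i (x0 i + x i - r • g)}) := fun i => by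
    simp only [indiff, Set.image, eq_comm, and_comm, Set.mem_ofPred_eq]
  simp only [hprices]
  refine EReal.sum_sSup_le_of_forall_sum_le _ _ _ fun r hr =>
    hS (fun i => x i - r i • g, ∑ i, r i) ⟨?_, fun i => ?_⟩
  · simp [Finset.sum_sub_distrib, ← Finset.sum_smul, hx]
  · simpa [add_sub_assoc] using hr i (Finset.mem_univ i)

end Market

theorem market_clearing_exists_general
    {I J : Type*} [Fintype I] [Nonempty I] [Fintype J]
    (u : I → EuclideanSpace ℝ J → EReal) (g : EuclideanSpace ℝ J)
    (x0 : I → EuclideanSpace ℝ J)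
    (husc : ∀ i, UpperSemicontinuous (u i))
    (hconc : ∀ i, HypoConcave (u i))
    (hne_top : ∀ i x, u i x ≠ ⊤)
    (hfin : ∀ i, u i (x0 i) ≠ ⊥)
    (hmono : ∀ i, ∀ x : EuclideanSpace ℝ J, ∀ r : ℝ, u i x ≠ ⊥ → 0 < r →
      u i x < u i (x + r • g))
    (hrec : ∀ x : I → EuclideanSpace ℝ J, (∑ i, x i) = 0 →
      (∀ i, 0 ≤ recession (u i) (x0 i) (x i)) → x = 0) :
    ∃ xb : I → EuclideanSpace ℝ J, (∑ i, xb i) = 0 ∧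
      (∑ i, indiff (u i) (x0 i) g (xb i)) =
        marketValue (fun i => indiff (u i) (x0 i) g) 0 := by
  classical
  obtain ⟨i0⟩ := ‹Nonempty I›
  obtain ⟨p, ⟨hp_sum, hp_u⟩, hp_max⟩ :=
    exists_forall_surplus_le husc hconc hne_top hfin hmono hrec
  set r : I → ℝ := Pi.single i0 p.2
  set xb : I → EuclideanSpace ℝ J := fun i => p.1 i + r i • g
  have hxb : ∑ i, xb i = 0 := by
    simp [xb, r, Finset.sum_add_distrib, ← Finset.sum_smul, hp_sum]
  have hval : ∑ i, indiff (u i) (x0 i) g (xb i) = p.2 := by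
    refine le_antisymm (sum_indiff_le_of_forall_surplus_le hp_max hxb) ?_
    calc (p.2 : EReal) = ∑ i, (r i : EReal) := by
          simp [r, Pi.single_apply, apply_ite ((↑) : ℝ → EReal)]
      _ ≤ _ := Finset.sum_le_sum fun i _ => le_indiff_add_smul (hp_u i) (r i)
  refine ⟨xb, hxb, Eq.symm <| IsGreatest.csSup_eq ⟨⟨xb, hxb, rfl⟩, ?_⟩⟩
  rintro _ ⟨x, hx, rfl⟩
  exact hval ▸ sum_indiff_le_of_forall_surplus_le hp_max hx

/-- Theorem exist: existence of solutions to the market clearing problem. -/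
theorem market_clearing_exists
    {I J : Type*} [Fintype I] [Nonempty I] [Fintype J] [Nonempty J]
    (u : I → EuclideanSpace ℝ J → EReal) (g : EuclideanSpace ℝ J)
    (x0 : I → EuclideanSpace ℝ J)
    (husc : ∀ i, UpperSemicontinuous (u i))
    (hconc : ∀ i, HypoConcave (u i))
    (hne_top : ∀ i x, u i x ≠ ⊤)
    (hfin : ∀ i, u i (x0 i) ≠ ⊥)
    (hmono : ∀ i, ∀ x : EuclideanSpace ℝ J, ∀ r : ℝ, u i x ≠ ⊥ → 0 < r →
      u i x < u i (x + r • g))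
    (hrec : ∀ x : I → EuclideanSpace ℝ J, (∑ i, x i) = 0 →
      (∀ i, 0 ≤ recession (u i) (x0 i) (x i)) → x = 0) :
    ∃ xb : I → EuclideanSpace ℝ J, (∑ i, xb i) = 0 ∧
      (∑ i, indiff (u i) (x0 i) g (xb i)) =
        marketValue (fun i => indiff (u i) (x0 i) g) 0 :=
  market_clearing_exists_general u g x0 husc hconc hne_top hfin hmono hrec
end
end

section
/- Suppose Assumption G holds (each u_i is upper semicontinuous, concave, u_i(x⁰_i) finite, and u_i(x + r·g) > u_i(x) whenever u_i(x) > −∞ and r > 0) and Assumption Z holds: for each i, if u_i(x) > u_i(x') for some x' with u_i(x') > −∞, then u_i(x − ε·g) > −∞ for all sufficiently small ε > 0. If CS(x⁰) := sup{∑_i D_i(x_i) : ∑_i x_i = 0} = 0, then the allocation x⁰ = (x⁰_i)_{i∈I} is Pareto efficient. -/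
open scoped BigOperators
open Metric Filter

noncomputable section

/-!
If `x'` Pareto-dominates `x⁰` with agent `i₀` strictly better off, Assumption Z gives `ε > 0`
with `u_{i₀}(x'_{i₀} - ε g) > -∞`, and concavity along the segment from `x'_{i₀}` to
`x'_{i₀} - ε g` shows that `i₀` still strictly prefers `x'_{i₀} - t g` to `x⁰_{i₀}` for some
`t > 0`. So the market-clearing trades `x' - x⁰` have `D_{i₀} ≥ t` and `D_i ≥ 0` for every `i`,
and their total surplus `t > 0` contradicts `CS(x⁰) = 0`.
-/

open Topology

theorem exists_mem_Ioc_lt_convex_combination {a v : ℝ} (hav : a < v) (w : ℝ) :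
    ∃ θ ∈ Set.Ioc (0 : ℝ) 1, a < (1 - θ) * v + θ * w := by
  have hlim : Tendsto (fun θ : ℝ => (1 - θ) * v + θ * w) (𝓝[>] 0) (𝓝 v) :=
    ((by fun_prop : Continuous fun θ : ℝ => (1 - θ) * v + θ * w).tendsto' 0 v
      (by simp)).mono_left nhdsWithin_le_nhds
  obtain ⟨θ, hθ, hθI⟩ :=
    ((hlim.eventually (lt_mem_nhds hav)).and (Ioc_mem_nhdsGT one_pos)).exists
  exact ⟨θ, hθI, hθ⟩

section Concave

variable {J : Type*} [Fintype J] {u : EuclideanSpace ℝ J → EReal}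

theorem HypoConcave.coe_add_le (hu : HypoConcave u) {x y : EuclideanSpace ℝ J} {v w a b : ℝ}
    (hv : (v : EReal) ≤ u x) (hw : (w : EReal) ≤ u y) (ha : 0 ≤ a) (hb : 0 ≤ b)
    (hab : a + b = 1) : ((a * v + b * w : ℝ) : EReal) ≤ u (a • x + b • y) :=
  hu (show (x, v) ∈ _ from hv) (show (y, w) ∈ _ from hw) ha hb hab

theorem HypoConcave.exists_pos_lt_apply_sub_smul (hu : HypoConcave u) {c : EReal}
    {x d : EuclideanSpace ℝ J} {ε : ℝ} (hx : c < u x) (hε : 0 < ε) (hd : u (x - ε • d) ≠ ⊥) :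
    ∃ t : ℝ, 0 < t ∧ c < u (x - t • d) := by
  obtain ⟨a, hca, hax⟩ := EReal.lt_iff_exists_real_btwn.1 hx
  obtain ⟨v, hav, hvx⟩ := EReal.lt_iff_exists_real_btwn.1 hax
  obtain ⟨w, -, hwd⟩ := EReal.lt_iff_exists_real_btwn.1 (bot_lt_iff_ne_bot.2 hd)
  obtain ⟨θ, ⟨hθ0, hθ1⟩, hθ⟩ :=
    exists_mem_Ioc_lt_convex_combination (EReal.coe_lt_coe_iff.1 hav) w
  refine ⟨θ * ε, mul_pos hθ0 hε, hca.trans ?_⟩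
  have hpt : (1 - θ) • x + θ • (x - ε • d) = x - (θ * ε) • d := by module
  calc (a : EReal) < ((1 - θ) * v + θ * w : ℝ) := EReal.coe_lt_coe_iff.2 hθ
    _ ≤ u ((1 - θ) • x + θ • (x - ε • d)) :=
      hu.coe_add_le hvx.le hwd.le (by linarith) hθ0.le (by ring)
    _ = u (x - (θ * ε) • d) := by rw [hpt]

theorem le_indiff_sub {x0 g x : EuclideanSpace ℝ J} {r : ℝ} (h : u x0 ≤ u (x - r • g)) :
    (r : EReal) ≤ indiff u x0 g (x - x0) :=
  le_sSup ⟨r, rfl, by rwa [add_sub_cancel]⟩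

end Concave

theorem sum_le_marketValue {I J : Type*} [Fintype I] [Fintype J]
    {D : I → EuclideanSpace ℝ J → EReal} {z : EuclideanSpace ℝ J} {x : I → EuclideanSpace ℝ J}
    (hx : ∑ i, x i = z) : ∑ i, D i (x i) ≤ marketValue D z :=
  le_sSup ⟨x, hx, rfl⟩

theorem equilibrium_implies_pareto_general
    {I J : Type*} [Fintype I] [Fintype J]
    (u : I → EuclideanSpace ℝ J → EReal) (g : EuclideanSpace ℝ J)
    (x0 : I → EuclideanSpace ℝ J)
    (hconc : ∀ i, HypoConcave (u i))
    (hfin : ∀ i, u i (x0 i) ≠ ⊥)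
    (hZ : ∀ i, ∀ x x' : EuclideanSpace ℝ J, u i x' ≠ ⊥ → u i x' < u i x →
      ∃ ε0 : ℝ, 0 < ε0 ∧ ∀ ε : ℝ, 0 < ε → ε ≤ ε0 → u i (x - ε • g) ≠ ⊥)
    (heq : marketValue (fun i => indiff (u i) (x0 i) g) 0 = 0) :
    ParetoEfficient u x0 := by
  rintro ⟨x', hsum, hle, i0, hlt⟩
  obtain ⟨ε, hε, hεbot⟩ := hZ i0 (x' i0) (x0 i0) (hfin i0) hlt
  obtain ⟨t, ht, hut⟩ := (hconc i0).exists_pos_lt_apply_sub_smul hlt hε (hεbot ε hε le_rfl)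
  set D := fun i => indiff (u i) (x0 i) g
  have hD_nonneg : ∀ i, 0 ≤ D i (x' i - x0 i) := fun i =>
    le_indiff_sub (by rw [zero_smul, sub_zero]; exact hle i)
  have : (t : EReal) ≤ 0 :=
    calc (t : EReal) ≤ D i0 (x' i0 - x0 i0) := le_indiff_sub hut.le
      _ ≤ ∑ i, D i (x' i - x0 i) :=
        Finset.single_le_sum (fun i _ => hD_nonneg i) (Finset.mem_univ i0)
      _ ≤ marketValue D 0 := sum_le_marketValue (by rw [Finset.sum_sub_distrib, hsum, sub_self])
      _ = 0 := heq
  exact ht.not_ge (EReal.coe_nonpos.1 this)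

/-- Theorem pareto, second part: under Assumption Z, double auction
equilibria are Pareto efficient. -/
theorem equilibrium_implies_pareto
    {I J : Type*} [Fintype I] [Nonempty I] [Fintype J] [Nonempty J]
    (u : I → EuclideanSpace ℝ J → EReal) (g : EuclideanSpace ℝ J)
    (x0 : I → EuclideanSpace ℝ J)
    (husc : ∀ i, UpperSemicontinuous (u i))
    (hconc : ∀ i, HypoConcave (u i))
    (hne_top : ∀ i x, u i x ≠ ⊤)
    (hfin : ∀ i, u i (x0 i) ≠ ⊥)
    (hmono : ∀ i, ∀ x : EuclideanSpace ℝ J, ∀ r : ℝ, u i x ≠ ⊥ → 0 < r →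
      u i x < u i (x + r • g))
    (hZ : ∀ i, ∀ x x' : EuclideanSpace ℝ J, u i x' ≠ ⊥ → u i x' < u i x →
      ∃ ε0 : ℝ, 0 < ε0 ∧ ∀ ε : ℝ, 0 < ε → ε ≤ ε0 → u i (x - ε • g) ≠ ⊥)
    (heq : marketValue (fun i => indiff (u i) (x0 i) g) 0 = 0) :
    ParetoEfficient u x0 :=
  equilibrium_implies_pareto_general u g x0 hconc hfin hZ heq
end
end

section
/- Suppose Assumption G holds (each u_i is upper semicontinuous, concave, u_i(x_i) finite, and u_i(x + r·g) > u_i(x) whenever u_i(x) > −∞ and r > 0) and Assumption Z holds: for each i, if u_i(y) > u_i(y') for some y' with u_i(y') > −∞, then u_i(y − ε·g) > −∞ for all sufficiently small ε > 0. Let x = (x_i)_{i∈I} be a feasible allocation and suppose there exists p ∈ ℝ^J with p·g = 1 such that for every i ∈ I and every w ∈ ℝ^J, p·w ≤ p·x_i implies u_i(w) ≤ u_i(x_i). Then x is Pareto efficient. -/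
open scoped BigOperators
open Metric Filter

noncomputable section

/-! Every bundle weakly preferred to `x i` costs at least `p·x i`: were it cheaper, adding the
leftover budget in units of the numeraire `g` would yield an affordable, strictly preferred bundle.
Some agent strictly prefers its bundle under a Pareto improvement, which then costs strictly more.
Summing, a Pareto improvement would have larger total value than `x`, yet it has the same total. -/

section Dotp

variable {J : Type*} [Fintype J]

lemma dotp_add_smul (p y g : EuclideanSpace ℝ J) (r : ℝ) :
    dotp p (y + r • g) = dotp p y + r * dotp p g := by
  simp only [dotp, Finset.mul_sum, ← Finset.sum_add_distrib, PiLp.add_apply, PiLp.smul_apply,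
    smul_eq_mul]
  exact Finset.sum_congr rfl fun j _ => by ring

lemma dotp_sum {I : Type*} [Fintype I] (p : EuclideanSpace ℝ J) (x : I → EuclideanSpace ℝ J) :
    dotp p (∑ i, x i) = ∑ i, dotp p (x i) := by
  simp only [dotp, WithLp.ofLp_sum, Finset.sum_apply, Finset.mul_sum]
  exact Finset.sum_comm

end Dotp

section BudgetOptimal

variable {J : Type*} [Fintype J] {u : EuclideanSpace ℝ J → EReal} {g p x w : EuclideanSpace ℝ J}

lemma dotp_lt_of_utility_lt (hval : ∀ w, dotp p w ≤ dotp p x → u w ≤ u x) (h : u x < u w) :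
    dotp p x < dotp p w :=
  lt_of_not_ge fun hw => (hval w hw).not_gt h

lemma dotp_le_of_utility_le (hfin : u x ≠ ⊥)
    (hmono : ∀ y, ∀ r : ℝ, u y ≠ ⊥ → 0 < r → u y < u (y + r • g)) (hpg : dotp p g = 1)
    (hval : ∀ w, dotp p w ≤ dotp p x → u w ≤ u x) (h : u x ≤ u w) :
    dotp p x ≤ dotp p w := by
  by_contra! hcheap
  set r := dotp p x - dotp p w
  have hw : u w ≠ ⊥ := fun hbot => hfin (le_bot_iff.mp (hbot ▸ h))
  have hbetter : u x < u (w + r • g) := h.trans_lt (hmono w r hw (sub_pos.mpr hcheap))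
  have haffordable : dotp p (w + r • g) = dotp p x := by
    rw [dotp_add_smul, hpg]
    ring
  exact (dotp_lt_of_utility_lt hval hbetter).ne' haffordable

end BudgetOptimal

theorem valuation_equilibrium_pareto_general
    {I J : Type*} [Fintype I] [Fintype J]
    (u : I → EuclideanSpace ℝ J → EReal) (g : EuclideanSpace ℝ J)
    (x : I → EuclideanSpace ℝ J)
    (hfin : ∀ i, u i (x i) ≠ ⊥)
    (hmono : ∀ i, ∀ y : EuclideanSpace ℝ J, ∀ r : ℝ, u i y ≠ ⊥ → 0 < r →
      u i y < u i (y + r • g))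
    (p : EuclideanSpace ℝ J) (hpg : dotp p g = 1)
    (hval : ∀ i, ∀ w : EuclideanSpace ℝ J, dotp p w ≤ dotp p (x i) →
      u i w ≤ u i (x i)) :
    ParetoEfficient u x := by
  rintro ⟨x', hsum, hle, i0, hlt⟩
  have hvalue : ∑ i, dotp p (x i) < ∑ i, dotp p (x' i) :=
    Finset.sum_lt_sum (fun i _ => dotp_le_of_utility_le (hfin i) (hmono i) hpg (hval i) (hle i))
      ⟨i0, Finset.mem_univ i0, dotp_lt_of_utility_lt (hval i0) hlt⟩
  rw [← dotp_sum, ← dotp_sum, hsum] at hvalue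
  exact hvalue.false

/-- Corollary ve2, Debreu's Theorem 1: a valuation-equilibrium
allocation is Pareto efficient. -/
theorem valuation_equilibrium_pareto
    {I J : Type*} [Fintype I] [Nonempty I] [Fintype J] [Nonempty J]
    (u : I → EuclideanSpace ℝ J → EReal) (g : EuclideanSpace ℝ J)
    (x : I → EuclideanSpace ℝ J)
    (husc : ∀ i, UpperSemicontinuous (u i))
    (hconc : ∀ i, HypoConcave (u i))
    (hne_top : ∀ i y, u i y ≠ ⊤)
    (hfin : ∀ i, u i (x i) ≠ ⊥)
    (hmono : ∀ i, ∀ y : EuclideanSpace ℝ J, ∀ r : ℝ, u i y ≠ ⊥ → 0 < r →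
      u i y < u i (y + r • g))
    (hZ : ∀ i, ∀ y y' : EuclideanSpace ℝ J, u i y' ≠ ⊥ → u i y' < u i y →
      ∃ ε0 : ℝ, 0 < ε0 ∧ ∀ ε : ℝ, 0 < ε → ε ≤ ε0 → u i (y - ε • g) ≠ ⊥)
    (p : EuclideanSpace ℝ J) (hpg : dotp p g = 1)
    (hval : ∀ i, ∀ w : EuclideanSpace ℝ J, dotp p w ≤ dotp p (x i) →
      u i w ≤ u i (x i)) :
    ParetoEfficient u x :=
  valuation_equilibrium_pareto_general u g x hfin hmono p hpg hval
end
end
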